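/- arXiv:2401.05588 — 3 statements merged into one kernel-verified Lean document; each statement's English description precedes it below -/
import Mathlib

section
/- Let F be a field, g a Lie algebra over F, and M a left g-module. Then the left hemi-semidirect product g ⋉_ℓ M is a Lie-simple left Leibniz algebra if, and only if, g is a simple Lie algebra and gM = M. -/
universe u v w

section LeibnizDefs

variable (F : Type v) [Field F] {L : Type u} [AddCommGroup L] [Module F L]

/-- The Leibniz kernel `Leib(L) = span_F {x² : x ∈ L}` of a (Leibniz) multiplication. -/
def leibKer (mul : L → L → L) : Submodule F L :=
  Submodule.span F {z : L | ∃ x : L, z = mul x x}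

/-- The derived subalgebra `L² = span_F {xy : x, y ∈ L}`. -/
def derivedSub (mul : L → L → L) : Submodule F L :=
  Submodule.span F {z : L | ∃ x y : L, z = mul x y}

/-- A (two-sided) ideal of an algebra with multiplication `mul`. -/
def IsIdealOf (mul : L → L → L) (I : Submodule F L) : Prop :=
  ∀ x : L, ∀ a ∈ I, mul x a ∈ I ∧ mul a x ∈ I

/-- The derived series of a subspace: `I⁽⁰⁾ = I`, `I⁽ⁿ⁺¹⁾ = span {ab : a, b ∈ I⁽ⁿ⁾}`. -/
def derSeries (mul : L → L → L) (I : Submodule F L) : ℕ → Submodule F L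
  | 0 => I
  | n + 1 => Submodule.span F
      {z : L | ∃ a ∈ derSeries mul I n, ∃ b ∈ derSeries mul I n, z = mul a b}

/-- A subspace is solvable if its derived series vanishes eventually. -/
def IsSolvableSub (mul : L → L → L) (I : Submodule F L) : Prop :=
  ∃ n : ℕ, derSeries F mul I n = ⊥

/-- A left Leibniz algebra is semi-simple if every solvable ideal is contained
in its Leibniz kernel. -/
def IsSemisimpleLeibniz (mul : L → L → L) : Prop :=
  ∀ I : Submodule F L, IsIdealOf F mul I → IsSolvableSub F mul I → I ≤ leibKer F mul

/-- A left Leibniz algebra is Lie-simple if the only ideals containing `Leib(L)`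
are `Leib(L)` and `L`, and `Leib(L) ⊊ L²`. -/
def IsLieSimpleLeibniz (mul : L → L → L) : Prop :=
  (∀ I : Submodule F L, IsIdealOf F mul I → leibKer F mul ≤ I →
      I = leibKer F mul ∨ I = ⊤) ∧ leibKer F mul < derivedSub F mul

/-- A left Leibniz algebra is simple if its only ideals are `0`, `Leib(L)` and `L`,
and `Leib(L) ⊊ L²`. -/
def IsSimpleLeibniz (mul : L → L → L) : Prop :=
  (∀ I : Submodule F L, IsIdealOf F mul I →
      I = ⊥ ∨ I = leibKer F mul ∨ I = ⊤) ∧ leibKer F mul < derivedSub F mul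

/-- A non-abelian algebra whose only ideals are `0` and the whole algebra. -/
def IsSimpleMul (mul : L → L → L) : Prop :=
  (∃ x y : L, mul x y ≠ 0) ∧
  ∀ I : Submodule F L, IsIdealOf F mul I → I = ⊥ ∨ I = ⊤

/-- The multiplication is bilinear over `F`. -/
def IsBilinearMul (mul : L → L → L) : Prop :=
  (∀ x y z : L, mul (x + y) z = mul x z + mul y z) ∧
  (∀ x y z : L, mul x (y + z) = mul x y + mul x z) ∧
  (∀ (c : F) (x y : L), mul (c • x) y = c • mul x y) ∧
  (∀ (c : F) (x y : L), mul x (c • y) = c • mul x y)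

/-- The left Leibniz identity `x(yz) = (xy)z + y(xz)`. -/
def IsLeftLeibnizMul (mul : L → L → L) : Prop :=
  ∀ x y z : L, mul x (mul y z) = mul (mul x y) z + mul y (mul x z)

end LeibnizDefs

section LieDefs

variable (F : Type v) [Field F] (g : Type u) [LieRing g] [LieAlgebra F g]

/-- A Lie algebra is semi-simple if its only solvable ideal is `0`. -/
def IsSemisimpleLieDef : Prop :=
  ∀ I : Submodule F g, IsIdealOf F (fun x y : g => ⁅x, y⁆) I →
    IsSolvableSub F (fun x y : g => ⁅x, y⁆) I → I = ⊥

/-- A Lie algebra is simple if it is non-abelian and its only ideals are `0` and `g`. -/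
def IsSimpleLieDef : Prop :=
  IsSimpleMul F (fun x y : g => ⁅x, y⁆)

end LieDefs

section ModuleDefs

variable (F : Type v) [Field F] (g : Type u) [LieRing g] [LieAlgebra F g]
  (M : Type w) [AddCommGroup M] [Module F M] [LieRingModule g M] [LieModule F g M]

/-- `gM := span_F {x·m : x ∈ g, m ∈ M}`. -/
def gModSpan : Submodule F M :=
  Submodule.span F {m : M | ∃ (x : g) (n : M), m = ⁅x, n⁆}

/-- A subspace of `M` that is stable under the `g`-action. -/
def IsLieSubmoduleOf (N : Submodule F M) : Prop :=
  ∀ x : g, ∀ n ∈ N, ⁅x, n⁆ ∈ N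

/-- `M` is an irreducible `g`-module: `M ≠ 0` and its only `g`-submodules are `0` and `M`. -/
def IsIrreducibleLieModule : Prop :=
  (∃ m : M, m ≠ 0) ∧
  ∀ N : Submodule F M, IsLieSubmoduleOf F g M N → N = ⊥ ∨ N = ⊤

/-- `M` is completely reducible: every `g`-submodule has a `g`-invariant complement. -/
def IsCompletelyReducibleLieModule : Prop :=
  ∀ N : Submodule F M, IsLieSubmoduleOf F g M N →
    ∃ N' : Submodule F M, IsLieSubmoduleOf F g M N' ∧ N ⊓ N' = ⊥ ∧ N ⊔ N' = ⊤

/-- `M` contains no non-zero trivial `g`-submodule. -/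
def HasNoTrivialLieSubmodule : Prop :=
  ∀ N : Submodule F M, IsLieSubmoduleOf F g M N →
    (∀ x : g, ∀ n ∈ N, ⁅x, n⁆ = (0 : M)) → N = ⊥

end ModuleDefs

/-- The multiplication `(x, m)(y, n) := ([x, y], x·n)` of the left hemi-semidirect
product `g ⋉_ℓ M`. -/
def hemiMul {g : Type u} {M : Type w} [LieRing g] [AddCommGroup M]
    [LieRingModule g M] (a b : g × M) : g × M :=
  (⁅a.1, b.1⁆, ⁅a.1, b.2⁆)

section AuxLemmas

variable (F : Type v) [Field F]
  (g : Type u) [LieRing g] [LieAlgebra F g]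
  (M : Type w) [AddCommGroup M] [Module F M] [LieRingModule g M] [LieModule F g M]

lemma leibKer_hemiMul_eq :
    leibKer F (hemiMul (g := g) (M := M)) =
      (⊥ : Submodule F g).prod (gModSpan F g M) := by
  apply le_antisymm
  · refine Submodule.span_le.2 ?_
    rintro z ⟨a, rfl⟩
    refine Submodule.mem_prod.2 ⟨?_, ?_⟩
    · simp [hemiMul]
    · exact Submodule.subset_span ⟨a.1, a.2, rfl⟩
  · rintro ⟨p, m⟩ hpm
    obtain ⟨hp, hm⟩ := Submodule.mem_prod.1 hpm
    rw [Submodule.mem_bot] at hp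
    subst hp
    have hmap : Submodule.map (LinearMap.inr F g M) (gModSpan F g M) ≤
        leibKer F (hemiMul (g := g) (M := M)) := by
      rw [gModSpan, Submodule.map_span, Submodule.span_le]
      rintro z ⟨w, ⟨x, n, rfl⟩, rfl⟩
      exact Submodule.subset_span ⟨(x, n), by simp [hemiMul]⟩
    exact hmap ⟨m, hm, rfl⟩

lemma derivedSub_hemiMul_eq :
    derivedSub F (hemiMul (g := g) (M := M)) =
      (derivedSub F (fun x y : g => ⁅x, y⁆)).prod (gModSpan F g M) := by
  apply le_antisymm
  · refine Submodule.span_le.2 ?_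
    rintro z ⟨a, b, rfl⟩
    refine Submodule.mem_prod.2 ⟨?_, ?_⟩
    · exact Submodule.subset_span ⟨a.1, b.1, rfl⟩
    · exact Submodule.subset_span ⟨a.1, b.2, rfl⟩
  · rintro ⟨p, m⟩ hpm
    obtain ⟨hp, hm⟩ := Submodule.mem_prod.1 hpm
    have h1 : Submodule.map (LinearMap.inl F g M)
        (derivedSub F (fun x y : g => ⁅x, y⁆)) ≤
        derivedSub F (hemiMul (g := g) (M := M)) := by
      rw [derivedSub, Submodule.map_span, Submodule.span_le]
      rintro z ⟨w, ⟨x, y, rfl⟩, rfl⟩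
      exact Submodule.subset_span ⟨(x, 0), (y, 0), by simp [hemiMul]⟩
    have h2 : Submodule.map (LinearMap.inr F g M) (gModSpan F g M) ≤
        derivedSub F (hemiMul (g := g) (M := M)) := by
      rw [gModSpan, Submodule.map_span, Submodule.span_le]
      rintro z ⟨w, ⟨x, n, rfl⟩, rfl⟩
      exact Submodule.subset_span ⟨(x, 0), (0, n), by simp [hemiMul]⟩
    have : ((p, m) : g × M) = (p, 0) + (0, m) := by simp
    rw [this]
    exact add_mem (h1 ⟨p, hp, rfl⟩) (h2 ⟨m, hm, rfl⟩)

lemma prod_top_isIdeal (J : Submodule F g)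
    (hJ : IsIdealOf F (fun x y : g => ⁅x, y⁆) J) :
    IsIdealOf F (hemiMul (g := g) (M := M)) (J.prod (⊤ : Submodule F M)) := by
  intro x a ha
  obtain ⟨ha1, _⟩ := Submodule.mem_prod.1 ha
  exact ⟨Submodule.mem_prod.2 ⟨(hJ x.1 a.1 ha1).1, trivial⟩,
    Submodule.mem_prod.2 ⟨(hJ x.1 a.1 ha1).2, trivial⟩⟩

end AuxLemmas

/-- `g ⋉_ℓ M` is a Lie-simple left Leibniz algebra if, and only if,
`g` is a simple Lie algebra and `gM = M`. -/
theorem hemiSemidirectProduct_lieSimple_iff (F : Type v) [Field F]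
    (g : Type u) [LieRing g] [LieAlgebra F g]
    (M : Type w) [AddCommGroup M] [Module F M] [LieRingModule g M] [LieModule F g M] :
    IsLieSimpleLeibniz F (hemiMul (g := g) (M := M)) ↔
      IsSimpleLieDef F g ∧ gModSpan F g M = ⊤ := by

  constructor
  · rintro ⟨H1, H2⟩
    have hNA : ∃ x y : g, ⁅x, y⁆ ≠ 0 := by
      by_contra h
      push_neg at h
      have hdg : derivedSub F (fun x y : g => ⁅x, y⁆) = ⊥ := by
        rw [eq_bot_iff]
        refine Submodule.span_le.2 ?_
        rintro z ⟨x, y, rfl⟩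
        simp [h x y]
      have h2 := H2
      rw [leibKer_hemiMul_eq, derivedSub_hemiMul_eq, hdg] at h2
      exact lt_irrefl _ h2
    obtain ⟨x0, y0, hxy⟩ := hNA
    have hx0 : x0 ≠ 0 := fun h => hxy (by simp [h])
    have hbotideal : IsIdealOf F (fun x y : g => ⁅x, y⁆) (⊥ : Submodule F g) := by
      intro x a ha
      rw [Submodule.mem_bot] at ha
      subst ha
      simp
    rcases H1 _ (prod_top_isIdeal F g M ⊥ hbotideal)
        (by rw [leibKer_hemiMul_eq]; exact Submodule.prod_mono le_rfl le_top) with h | h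
    · have hgM : gModSpan F g M = ⊤ := by
        rw [eq_top_iff]
        intro m _
        have hm : ((0 : g), m) ∈ (⊥ : Submodule F g).prod (⊤ : Submodule F M) :=
          Submodule.mem_prod.2 ⟨Submodule.zero_mem _, Submodule.mem_top⟩
        rw [h, leibKer_hemiMul_eq] at hm
        exact (Submodule.mem_prod.1 hm).2
      refine ⟨⟨⟨x0, y0, hxy⟩, ?_⟩, hgM⟩
      intro J hJ
      rcases H1 (J.prod ⊤) (prod_top_isIdeal F g M J hJ)
          (by rw [leibKer_hemiMul_eq]; exact Submodule.prod_mono bot_le le_top) with h' | h'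
      · left
        rw [leibKer_hemiMul_eq] at h'
        rw [eq_bot_iff]
        intro j hj
        have hjm : ((j : g), (0 : M)) ∈ J.prod (⊤ : Submodule F M) :=
          Submodule.mem_prod.2 ⟨hj, Submodule.mem_top⟩
        rw [h'] at hjm
        exact (Submodule.mem_prod.1 hjm).1
      · right
        rw [eq_top_iff]
        intro x _
        have hxm : ((x : g), (0 : M)) ∈ J.prod (⊤ : Submodule F M) := by
          rw [h']; exact Submodule.mem_top
        exact (Submodule.mem_prod.1 hxm).1
    · exfalso
      have hxm : ((x0, (0 : M)) : g × M) ∈ (⊥ : Submodule F g).prod (⊤ : Submodule F M) := by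
        rw [h]; exact Submodule.mem_top
      exact hx0 (by simpa using (Submodule.mem_prod.1 hxm).1)
  · rintro ⟨⟨⟨x0, y0, hxy⟩, hId⟩, hgM⟩
    have hx0 : x0 ≠ 0 := fun h => hxy (by simp [h])
    have hdgIdeal : IsIdealOf F (fun x y : g => ⁅x, y⁆)
        (derivedSub F (fun x y : g => ⁅x, y⁆)) := by
      intro x a _
      exact ⟨Submodule.subset_span ⟨x, a, rfl⟩, Submodule.subset_span ⟨a, x, rfl⟩⟩
    have hdg : derivedSub F (fun x y : g => ⁅x, y⁆) = ⊤ := by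
      rcases hId _ hdgIdeal with h | h
      · exfalso
        have hb : ⁅x0, y0⁆ ∈ derivedSub F (fun x y : g => ⁅x, y⁆) :=
          Submodule.subset_span ⟨x0, y0, rfl⟩
        rw [h, Submodule.mem_bot] at hb
        exact hxy hb
      · exact h
    constructor
    · intro I hI hLeib
      have hinr : ∀ m : M, ((0 : g), m) ∈ I := by
        intro m
        apply hLeib
        rw [leibKer_hemiMul_eq, hgM]
        exact Submodule.mem_prod.2 ⟨Submodule.zero_mem _, Submodule.mem_top⟩
      set J := Submodule.map (LinearMap.fst F g M) I with hJdef
      have hJideal : IsIdealOf F (fun x y : g => ⁅x, y⁆) J := by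
        intro x a ha
        obtain ⟨b, hb, hb1⟩ := ha
        subst hb1
        have h1 : hemiMul (x, (0 : M)) b ∈ I := (hI (x, 0) b hb).1
        have h2 : ⁅x, b.1⁆ ∈ J := ⟨hemiMul (x, 0) b, h1, by simp [hemiMul]⟩
        refine ⟨h2, ?_⟩
        show ⁅b.1, x⁆ ∈ J
        have h3 : ⁅b.1, x⁆ = -⁅x, b.1⁆ := (lie_skew b.1 x).symm
        rw [h3]
        exact J.neg_mem h2
      rcases hId J hJideal with h | h
      · left
        refine le_antisymm ?_ hLeib
        intro p hp
        have hp1 : p.1 ∈ J := ⟨p, hp, rfl⟩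
        rw [h, Submodule.mem_bot] at hp1
        rw [leibKer_hemiMul_eq, hgM]
        exact Submodule.mem_prod.2 ⟨by simp [hp1], Submodule.mem_top⟩
      · right
        rw [eq_top_iff]
        intro p _
        have hp1 : p.1 ∈ J := by rw [h]; exact Submodule.mem_top
        obtain ⟨b, hb, hb1⟩ := hp1
        have hpe : p = (b - ((0 : g), b.2)) + ((0 : g), p.2) := by
          apply Prod.ext
          · simp [← hb1]
          · simp
        rw [hpe]
        exact add_mem (sub_mem hb (hinr b.2)) (hinr p.2)
    · rw [leibKer_hemiMul_eq, derivedSub_hemiMul_eq, hgM, hdg]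
      refine lt_of_le_of_ne (Submodule.prod_mono bot_le le_rfl) ?_
      intro h
      have hxm : ((x0, (0 : M)) : g × M) ∈
          (⊥ : Submodule F g).prod (⊤ : Submodule F M) := by
        rw [h
          ]
        exact Submodule.mem_prod.2 ⟨Submodule.mem_top, Submodule.mem_top⟩
      exact hx0 (by simpa using (Submodule.mem_prod.1 hxm).1)
end

section
/- Let F be a field, g a Lie algebra over F, and M a left g-module. Then the left hemi-semidirect product g ⋉_ℓ M is a simple left Leibniz algebra if, and only if, g is a simple Lie algebra and either M = 0 or M is a non-trivial irreducible g-module. (No hypothesis on the dimensions of g and M or on the characteristic of F is needed.) -/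
universe u v w

/-!
In `L = g ⋉_ℓ M` the square of `(x, m)` is `(0, x·m)`, so `Leib(L) = 0 × gM`, and the product
`(x, m)(y, n) = ([x, y], x·n)` does not see `m`. Hence `J × gM` is an ideal for every ideal `J`
of `g` and `0 × N` is an ideal for every submodule `N` of `M`; conversely an ideal `I` projects
onto an ideal `J` of `g` and meets `0 × M` in a submodule `N` with `J·M ⊆ N`, which pins `I` down
once `J` and `N` are `0` or everything. Moreover `Leib(L) ⊊ L²` exactly when `g` is non-abelian.
So `L` is simple iff `g` is simple, `M` has no submodules but `0` and `M`, and `gM = M`; the last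
two conditions say that `M = 0` or `M` is a non-trivial irreducible module.
-/

namespace Submodule

theorem eq_bot_prod_comap_inr_of_map_fst_eq_bot {R A B : Type*} [Semiring R] [AddCommMonoid A]
    [AddCommMonoid B] [Module R A] [Module R B] {I : Submodule R (A × B)}
    (h : I.map (LinearMap.fst R A B) = ⊥) :
    I = (⊥ : Submodule R A).prod (I.comap (LinearMap.inr R A B)) := by
  refine le_antisymm (fun p hp => ?_) ((prod_le_iff R A B).2 ⟨by simp, map_comap_le _ _⟩)
  have hp₁ : p.1 ∈ I.map (LinearMap.fst R A B) := ⟨p, hp, rfl⟩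
  rw [h, mem_bot] at hp₁
  refine ⟨hp₁, ?_⟩
  show (0, p.2) ∈ I
  rwa [← hp₁]

theorem eq_prod_top_of_comap_inr_eq_top {R A B : Type*} [Semiring R] [AddCommMonoid A]
    [AddCommGroup B] [Module R A] [Module R B] {I : Submodule R (A × B)}
    (h : I.comap (LinearMap.inr R A B) = ⊤) :
    I = (I.map (LinearMap.fst R A B)).prod ⊤ := by
  refine le_antisymm ((le_prod_iff R A B).2 ⟨le_rfl, le_top⟩) ?_
  rintro p ⟨⟨q, hq, hqp⟩, -⟩
  have hinr : LinearMap.inr R A B (p.2 - q.2) ∈ I := by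
    rw [← mem_comap, h]
    exact mem_top
  have hpq : p = q + LinearMap.inr R A B (p.2 - q.2) := Prod.ext (by simpa using hqp.symm) (by simp)
  rw [hpq]
  exact I.add_mem hq hinr

end Submodule

section HemiSemidirectProduct

open Submodule

variable {F : Type*} [Field F] {g : Type*} [LieRing g]
  {M : Type*} [AddCommGroup M] [Module F M] [LieRingModule g M]

theorem lie_mem_gModSpan (x : g) (m : M) : ⁅x, m⁆ ∈ gModSpan F g M :=
  subset_span ⟨x, m, rfl⟩

theorem isLieSubmoduleOf_gModSpan : IsLieSubmoduleOf F g M (gModSpan F g M) :=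
  fun x n _ => lie_mem_gModSpan x n

theorem subsingleton_or_nontrivial_irreducible_iff :
    ((∀ m : M, m = 0) ∨ ((∃ (x : g) (m : M), ⁅x, m⁆ ≠ 0) ∧ IsIrreducibleLieModule F g M)) ↔
      (∀ N : Submodule F M, IsLieSubmoduleOf F g M N → N = ⊥ ∨ N = ⊤) ∧
        gModSpan F g M = ⊤ := by
  constructor
  · rintro (hM | ⟨⟨x, m, hxm⟩, -, hirr⟩)
    · have : Subsingleton M := ⟨fun a b => (hM a).trans (hM b).symm⟩
      exact ⟨fun N _ => .inl (Subsingleton.elim _ _), Subsingleton.elim _ _⟩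
    · refine ⟨hirr, (hirr _ isLieSubmoduleOf_gModSpan).resolve_left fun hbot => hxm ?_⟩
      simpa [hbot] using lie_mem_gModSpan (F := F) x m
  · rintro ⟨hM, hgM⟩
    by_cases hzero : ∀ m : M, m = 0
    · exact .inl hzero
    obtain ⟨m, hm⟩ := not_forall.1 hzero
    refine .inr ⟨?_, ⟨m, hm⟩, hM⟩
    by_contra! htriv
    have hbot : gModSpan F g M = ⊥ := span_eq_bot.2 (by rintro _ ⟨x, n, rfl⟩; exact htriv x n)
    have hmem : m ∈ gModSpan F g M := hgM ▸ mem_top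
    rw [hbot, mem_bot] at hmem
    exact hm hmem

variable [LieAlgebra F g]

local notation "μ" => hemiMul (g := g) (M := M)

theorem leibKer_hemiMul : leibKer F μ = (⊥ : Submodule F g).prod (gModSpan F g M) := by
  refine le_antisymm (span_le.2 ?_) ?_
  · rintro _ ⟨a, rfl⟩
    exact ⟨by simp [hemiMul], lie_mem_gModSpan _ _⟩
  · rw [← map_inr, gModSpan, map_span, span_le]
    rintro _ ⟨_, ⟨x, n, rfl⟩, rfl⟩
    exact subset_span ⟨(x, n), by simp [hemiMul]⟩

theorem leibKer_hemiMul_lt_derivedSub_iff :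
    leibKer F μ < derivedSub F μ ↔ ∃ x y : g, ⁅x, y⁆ ≠ 0 := by
  have hle : leibKer F μ ≤ derivedSub F μ := span_mono (by rintro _ ⟨a, rfl⟩; exact ⟨a, a, rfl⟩)
  rw [lt_iff_le_not_ge, and_iff_right hle, derivedSub, span_le, leibKer_hemiMul]
  simp [Set.subset_def, hemiMul, lie_mem_gModSpan]

theorem isIdealOf_prod_gModSpan {J : Submodule F g}
    (hJ : IsIdealOf F (fun x y : g => ⁅x, y⁆) J) : IsIdealOf F μ (J.prod (gModSpan F g M)) :=
  fun z a ha => ⟨⟨(hJ z.1 a.1 ha.1).1, lie_mem_gModSpan _ _⟩,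
    ⟨(hJ z.1 a.1 ha.1).2, lie_mem_gModSpan _ _⟩⟩

theorem isIdealOf_bot_prod {N : Submodule F M} (hN : IsLieSubmoduleOf F g M N) :
    IsIdealOf F μ ((⊥ : Submodule F g).prod N) := by
  rintro z ⟨x, n⟩ ⟨hx : x ∈ (⊥ : Submodule F g), hn : n ∈ N⟩
  rw [mem_bot] at hx
  subst hx
  exact ⟨⟨by simp [hemiMul], hN z.1 n hn⟩, ⟨by simp [hemiMul], by simp [hemiMul]⟩⟩

namespace IsIdealOf

variable {I : Submodule F (g × M)}

theorem map_fst (hI : IsIdealOf F μ I) :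
    IsIdealOf F (fun x y : g => ⁅x, y⁆) (I.map (LinearMap.fst F g M)) := by
  rintro x _ ⟨p, hp, rfl⟩
  exact ⟨⟨_, (hI (x, 0) p hp).1, rfl⟩, ⟨_, (hI (x, 0) p hp).2, rfl⟩⟩

theorem isLieSubmoduleOf_comap_inr (hI : IsIdealOf F μ I) :
    IsLieSubmoduleOf F g M (I.comap (LinearMap.inr F g M)) :=
  fun x n hn => by simpa [hemiMul] using (hI (x, 0) _ hn).1

theorem lie_mem_comap_inr (hI : IsIdealOf F μ I) {x : g}
    (hx : x ∈ I.map (LinearMap.fst F g M)) (m : M) :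
    ⁅x, m⁆ ∈ I.comap (LinearMap.inr F g M) := by
  obtain ⟨p, hp, rfl⟩ := hx
  simpa [hemiMul] using (hI (0, m) p hp).2

theorem gModSpan_le_comap_inr (hI : IsIdealOf F μ I) (hJ : I.map (LinearMap.fst F g M) = ⊤) :
    gModSpan F g M ≤ I.comap (LinearMap.inr F g M) := by
  refine span_le.2 ?_
  rintro _ ⟨x, m, rfl⟩
  exact hI.lie_mem_comap_inr (hJ ▸ mem_top) m

end IsIdealOf

namespace IsSimpleLeibniz

theorem isSimpleLieDef (h : IsSimpleLeibniz F μ) : IsSimpleLieDef F g := by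
  refine ⟨leibKer_hemiMul_lt_derivedSub_iff.1 h.2, fun J hJ => ?_⟩
  rcases h.1 _ (isIdealOf_prod_gModSpan (M := M) hJ) with hJ' | hJ' | hJ'
  · exact .inl ((prod_eq_bot_iff _ _ _).1 hJ').1
  · rw [leibKer_hemiMul] at hJ'
    exact .inl (by simpa only [prod_map_fst] using congrArg (map (LinearMap.fst F g M)) hJ')
  · exact .inr ((prod_eq_top_iff _ _ _).1 hJ').1

theorem gModSpan_eq_top (h : IsSimpleLeibniz F μ) : gModSpan F g M = ⊤ := by
  obtain ⟨x, y, hxy⟩ := leibKer_hemiMul_lt_derivedSub_iff.1 h.2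
  have : Nontrivial g := ⟨x, 0, fun hx => hxy (by simp [hx])⟩
  have htop : IsIdealOf F (fun x y : g => ⁅x, y⁆) ⊤ := fun _ _ _ => ⟨mem_top, mem_top⟩
  rcases h.1 _ (isIdealOf_prod_gModSpan (M := M) htop) with h' | h' | h'
  · exact absurd ((prod_eq_bot_iff _ _ _).1 h').1 top_ne_bot
  · rw [leibKer_hemiMul] at h'
    have := congrArg (map (LinearMap.fst F g M)) h'
    simp only [prod_map_fst] at this
    exact absurd this top_ne_bot
  · exact ((prod_eq_top_iff _ _ _).1 h').2

theorem eq_bot_or_eq_top (h : IsSimpleLeibniz F μ) {N : Submodule F M}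
    (hN : IsLieSubmoduleOf F g M N) : N = ⊥ ∨ N = ⊤ := by
  rcases h.1 _ (isIdealOf_bot_prod hN) with h' | h' | h'
  · exact .inl ((prod_eq_bot_iff _ _ _).1 h').2
  · rw [leibKer_hemiMul, h.gModSpan_eq_top] at h'
    exact .inr (by simpa only [prod_comap_inr] using congrArg (comap (LinearMap.inr F g M)) h')
  · exact .inr ((prod_eq_top_iff _ _ _).1 h').2

end IsSimpleLeibniz

theorem isSimpleLeibniz_hemiMul (hg : IsSimpleLieDef F g)
    (hM : ∀ N : Submodule F M, IsLieSubmoduleOf F g M N → N = ⊥ ∨ N = ⊤)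
    (hgM : gModSpan F g M = ⊤) : IsSimpleLeibniz F μ := by
  refine ⟨fun I hI => ?_, leibKer_hemiMul_lt_derivedSub_iff.2 hg.1⟩
  rw [leibKer_hemiMul, hgM]
  rcases hg.2 _ hI.map_fst with hJ | hJ
  · rw [eq_bot_prod_comap_inr_of_map_fst_eq_bot hJ]
    rcases hM _ hI.isLieSubmoduleOf_comap_inr with hN | hN <;> simp [hN]
  · have hN : I.comap (LinearMap.inr F g M) = ⊤ := top_unique (hgM ▸ hI.gModSpan_le_comap_inr hJ)
    refine .inr (.inr ?_)
    rw [eq_prod_top_of_comap_inr_eq_top hN, hJ, prod_top]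

end HemiSemidirectProduct

theorem hemiSemidirectProduct_simple_iff_general (F : Type v) [Field F]
    (g : Type u) [LieRing g] [LieAlgebra F g]
    (M : Type w) [AddCommGroup M] [Module F M] [LieRingModule g M] :
    IsSimpleLeibniz F (hemiMul (g := g) (M := M)) ↔
      IsSimpleLieDef F g ∧
        ((∀ m : M, m = 0) ∨
          ((∃ (x : g) (m : M), ⁅x, m⁆ ≠ 0) ∧ IsIrreducibleLieModule F g M)) := by
  rw [subsingleton_or_nontrivial_irreducible_iff]
  exact ⟨fun h => ⟨h.isSimpleLieDef, fun _ => h.eq_bot_or_eq_top, h.gModSpan_eq_top⟩,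
    fun ⟨hg, hM, hgM⟩ => isSimpleLeibniz_hemiMul hg hM hgM⟩

/-- `g ⋉_ℓ M` is a simple left Leibniz algebra if, and only if,
`g` is a simple Lie algebra and either `M = 0` or `M` is a non-trivial irreducible
`g`-module. -/
theorem hemiSemidirectProduct_simple_iff (F : Type v) [Field F]
    (g : Type u) [LieRing g] [LieAlgebra F g]
    (M : Type w) [AddCommGroup M] [Module F M] [LieRingModule g M] [LieModule F g M] :
    IsSimpleLeibniz F (hemiMul (g := g) (M := M)) ↔
      IsSimpleLieDef F g ∧
        ((∀ m : M, m = 0) ∨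
          ((∃ (x : g) (m : M), ⁅x, m⁆ ≠ 0) ∧ IsIrreducibleLieModule F g M)) :=
  hemiSemidirectProduct_simple_iff_general F g M
end

section
/- Let F be a field, g a perfect Lie algebra over F (i.e., [g,g] = g), and M a left g-module on which g acts non-trivially (i.e., x·m ≠ 0 for some x ∈ g, m ∈ M). Then the left hemi-semidirect product g ⋉_ℓ M is not left central; that is, Leib(g ⋉_ℓ M) is not contained in C^r(g ⋉_ℓ M). -/
universe u v w

/-- If `g` is a perfect Lie algebra and `M` is a left `g`-module with
non-trivial action, then the left hemi-semidirect product `g ⋉_ℓ M` is not left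
central, i.e., `Leib(g ⋉_ℓ M) ⊄ C^r(g ⋉_ℓ M)`. -/
theorem hemiSemidirectProduct_not_leftCentral (F : Type v) [Field F]
    (g : Type u) [LieRing g] [LieAlgebra F g]
    (M : Type w) [AddCommGroup M] [Module F M] [LieRingModule g M] [LieModule F g M]
    (hperf : derivedSub F (fun x y : g => ⁅x, y⁆) = ⊤)
    (hnontriv : ∃ (x : g) (m : M), ⁅x, m⁆ ≠ 0) :
    ¬ ∀ c ∈ leibKer F (hemiMul (g := g) (M := M)),
        ∀ x : g × M, hemiMul x c = 0 := by
  intro h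
  obtain ⟨x, m, hxm⟩ := hnontriv
  -- Step 1: g annihilates all elements of the form ⁅x, m⁆
  have hann : ∀ (y a : g) (n : M), ⁅y, ⁅a, n⁆⁆ = 0 := by
    intro y a n
    have hc : ((0 : g), ⁅a, n⁆) ∈ leibKer F (hemiMul (g := g) (M := M)) := by
      apply Submodule.subset_span
      refine ⟨(a, n), ?_⟩
      simp [hemiMul]
    have := h _ hc (y, 0)
    have h2 := congrArg Prod.snd this
    simpa [hemiMul] using h2
  -- Step 2: every x acts trivially, contradiction
  apply hxm
  have hx : x ∈ derivedSub F (fun x y : g => ⁅x, y⁆) := by rw [hperf]; trivial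
  refine Submodule.span_induction (p := fun z _ => ⁅z, m⁆ = 0) ?_ ?_ ?_ ?_ hx
  · rintro z ⟨a, b, rfl⟩
    have : ⁅⁅a, b⁆, m⁆ = ⁅a, ⁅b, m⁆⁆ - ⁅b, ⁅a, m⁆⁆ := by
      rw [leibniz_lie]; abel
    rw [this, hann, hann, sub_zero]
  · simp
  · intro u v _ _ hu hv; rw [add_lie, hu, hv, add_zero]
  · intro c u _ hu; rw [smul_lie, hu, smul_zero]
end
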